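/- arXiv:1402.2786 — 3 statements merged into one kernel-verified Lean document; each statement's English description precedes it below -/
import Mathlib

section
/- Let X = {X_t}_{t∈I} be a stochastic process such that for each t ∈ I, X_t has a continuous distribution F_t that is strictly increasing in a neighbourhood of its median m_t. Then the coordinatewise median m_c = {m_t}_{t∈I} maximizes the modified band depth MBD(x) = Σ_{j=2}^J ∫_I [1 - F_t(x_t)^j - (1 - F_t(x_t))^j] dΛ(t) over all measurable x : I → ℝ, and any x which equals m_c outside a Λ-null set is also a maximizer. -/
open MeasureTheory

/-! By convexity of `p ↦ p ^ j`, `p ^ j + (1 - p) ^ j ≥ 2 (1/2) ^ j` on `[0, 1]`, so every integrand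
`1 - F_t(x_t) ^ j - (1 - F_t(x_t)) ^ j` is bounded pointwise by its value `1 - 2 (1/2) ^ j` at the
median, where `F_t = 1/2`. Integrating against the probability measure `Λ` gives the bound, and a
function agreeing with `m` almost everywhere still has `F_t(x_t) = 1/2` almost everywhere. -/

lemma two_mul_half_pow_le_pow_add_one_sub_pow (j : ℕ) {p : ℝ} (h0 : 0 ≤ p) (h1 : p ≤ 1) :
    2 * (1 / 2 : ℝ) ^ j ≤ p ^ j + (1 - p) ^ j := by
  have hconvex := (convexOn_pow j).2 (Set.mem_Ici.mpr h0) (Set.mem_Ici.mpr (sub_nonneg.mpr h1))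
    (by norm_num : (0 : ℝ) ≤ 1 / 2) (by norm_num : (0 : ℝ) ≤ 1 / 2) (by norm_num)
  have hmid : (1 / 2 : ℝ) • p + (1 / 2 : ℝ) • (1 - p) = 1 / 2 := by
    simp only [smul_eq_mul]; ring
  rw [hmid, smul_eq_mul, smul_eq_mul] at hconvex
  linarith

section

variable {Ω : Type*} [MeasurableSpace Ω] (μ : Measure Ω) [IsProbabilityMeasure μ] (j : ℕ)
  {g : Ω → ℝ}

lemma integral_one_sub_pow_sub_one_sub_pow_le (hg : ∀ᵐ ω ∂μ, g ω ∈ Set.Icc (0 : ℝ) 1)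
    (hint : Integrable (fun ω => 1 - g ω ^ j - (1 - g ω) ^ j) μ) :
    ∫ ω, (1 - g ω ^ j - (1 - g ω) ^ j) ∂μ ≤ 1 - 2 * (1 / 2 : ℝ) ^ j := by
  calc ∫ ω, (1 - g ω ^ j - (1 - g ω) ^ j) ∂μ
      ≤ ∫ _ω, (1 - 2 * (1 / 2 : ℝ) ^ j) ∂μ := by
        refine integral_mono_ae hint (integrable_const _) ?_
        filter_upwards [hg] with ω hω
        linarith [two_mul_half_pow_le_pow_add_one_sub_pow j hω.1 hω.2]
    _ = 1 - 2 * (1 / 2 : ℝ) ^ j := by simp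

lemma integral_one_sub_pow_sub_one_sub_pow_of_ae_eq_half (hg : ∀ᵐ ω ∂μ, g ω = 1 / 2) :
    ∫ ω, (1 - g ω ^ j - (1 - g ω) ^ j) ∂μ = 1 - 2 * (1 / 2 : ℝ) ^ j := by
  calc ∫ ω, (1 - g ω ^ j - (1 - g ω) ^ j) ∂μ
      = ∫ _ω, (1 - 2 * (1 / 2 : ℝ) ^ j) ∂μ := by
        refine integral_congr_ae ?_
        filter_upwards [hg] with ω hω
        rw [hω]; ring
    _ = 1 - 2 * (1 / 2 : ℝ) ^ j := by simp

end

theorem coordinatewise_median_maximizes_MBD_general {I : Type*} [MeasurableSpace I]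
    (Λ : Measure I) [IsProbabilityMeasure Λ] (J : ℕ)
    (F : I → ℝ → ℝ) (hF : ∀ t y, F t y ∈ Set.Icc (0 : ℝ) 1)
    (m : I → ℝ) (hm : ∀ t, F t (m t) = 1/2) :
    (∀ x : I → ℝ,
      (∀ j ∈ Finset.Icc 2 J,
        Integrable (fun t => 1 - (F t (x t)) ^ j - (1 - F t (x t)) ^ j) Λ) →
      ∑ j ∈ Finset.Icc 2 J, ∫ t, (1 - (F t (x t)) ^ j - (1 - F t (x t)) ^ j) ∂Λ ≤
        ∑ j ∈ Finset.Icc 2 J, ∫ t, (1 - (F t (m t)) ^ j - (1 - F t (m t)) ^ j) ∂Λ) ∧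
    (∀ x : I → ℝ, x =ᵐ[Λ] m →
      ∑ j ∈ Finset.Icc 2 J, ∫ t, (1 - (F t (x t)) ^ j - (1 - F t (x t)) ^ j) ∂Λ =
        ∑ j ∈ Finset.Icc 2 J, ∫ t, (1 - (F t (m t)) ^ j - (1 - F t (m t)) ^ j) ∂Λ) := by
  have hmedian (j : ℕ) := integral_one_sub_pow_sub_one_sub_pow_of_ae_eq_half Λ j (ae_of_all _ hm)
  refine ⟨fun x hx => Finset.sum_le_sum fun j hj => ?_, fun x hxm => Finset.sum_congr rfl
    fun j _ => ?_⟩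
  · rw [hmedian]
    exact integral_one_sub_pow_sub_one_sub_pow_le Λ j (ae_of_all _ fun t => hF t (x t)) (hx j hj)
  · rw [hmedian]
    exact integral_one_sub_pow_sub_one_sub_pow_of_ae_eq_half Λ j
      (hxm.mono fun t ht => by rw [ht, hm])

/-- The coordinatewise median maximizes the modified band depth
`MBD(x) = Σ_{j=2}^J ∫_I [1 - F_t(x_t)^j - (1 - F_t(x_t))^j] dΛ(t)`, and so does
any function agreeing with it outside a `Λ`-null set. -/
theorem coordinatewise_median_maximizes_MBD {I : Type*} [MeasurableSpace I]
    (Λ : Measure I) [IsProbabilityMeasure Λ] (J : ℕ) (hJ : 2 ≤ J)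
    (F : I → ℝ → ℝ) (hF : ∀ t y, F t y ∈ Set.Icc (0 : ℝ) 1)
    (m : I → ℝ) (hm : ∀ t, F t (m t) = 1/2) :
    (∀ x : I → ℝ,
      (∀ j ∈ Finset.Icc 2 J,
        Integrable (fun t => 1 - (F t (x t)) ^ j - (1 - F t (x t)) ^ j) Λ) →
      ∑ j ∈ Finset.Icc 2 J, ∫ t, (1 - (F t (x t)) ^ j - (1 - F t (x t)) ^ j) ∂Λ ≤
        ∑ j ∈ Finset.Icc 2 J, ∫ t, (1 - (F t (m t)) ^ j - (1 - F t (m t)) ^ j) ∂Λ) ∧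
    (∀ x : I → ℝ, x =ᵐ[Λ] m →
      ∑ j ∈ Finset.Icc 2 J, ∫ t, (1 - (F t (x t)) ^ j - (1 - F t (x t)) ^ j) ∂Λ =
        ∑ j ∈ Finset.Icc 2 J, ∫ t, (1 - (F t (m t)) ^ j - (1 - F t (m t)) ^ j) ∂Λ) :=
  coordinatewise_median_maximizes_MBD_general Λ J F hF m hm
end

section
/- Let X = {X_t}_{t∈I} be a stochastic process with F_t(m_t) = 1/2 for each t ∈ I, where F_t is the CDF of X_t and m_t the median of X_t. Then the coordinatewise median m_c = {m_t} maximizes the modified half-region depth MHRD(x) = min{∫_I F_t(x_t) dΛ(t), 1 - ∫_I F_t(x_t) dΛ(t)}, and its maximum value is 1/2. -/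
open MeasureTheory

theorem min_one_sub_le_half (a : ℝ) : min a (1 - a) ≤ 1 / 2 := by
  rcases le_total a (1 / 2) with h | h
  · exact (min_le_left _ _).trans h
  · exact (min_le_right _ _).trans (by linarith)

theorem coordinatewise_median_maximizes_MHRD_general {I : Type*} [MeasurableSpace I]
    (Λ : Measure I) [IsProbabilityMeasure Λ]
    (F : I → ℝ → ℝ)
    (m : I → ℝ) (hm : ∀ t, F t (m t) = 1/2) :
    min (∫ t, F t (m t) ∂Λ) (1 - ∫ t, F t (m t) ∂Λ) = 1/2 ∧
    ∀ x : I → ℝ, Integrable (fun t => F t (x t)) Λ →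
      min (∫ t, F t (x t) ∂Λ) (1 - ∫ t, F t (x t) ∂Λ) ≤
        min (∫ t, F t (m t) ∂Λ) (1 - ∫ t, F t (m t) ∂Λ) := by
  have median_depth : ∫ t, F t (m t) ∂Λ = 1 / 2 := by simp [hm]
  have max_depth : min (1 / 2 : ℝ) (1 - 1 / 2) = 1 / 2 := by norm_num
  rw [median_depth, max_depth]
  exact ⟨rfl, fun x _ => min_one_sub_le_half _⟩

/-- The coordinatewise median maximizes the modified half-region depth
`MHRD(x) = min {∫ F_t(x_t) dΛ, 1 - ∫ F_t(x_t) dΛ}`, and its maximum value is `1/2`. -/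
theorem coordinatewise_median_maximizes_MHRD {I : Type*} [MeasurableSpace I]
    (Λ : Measure I) [IsProbabilityMeasure Λ]
    (F : I → ℝ → ℝ) (hF : ∀ t y, F t y ∈ Set.Icc (0 : ℝ) 1)
    (m : I → ℝ) (hm : ∀ t, F t (m t) = 1/2) :
    min (∫ t, F t (m t) ∂Λ) (1 - ∫ t, F t (m t) ∂Λ) = 1/2 ∧
    ∀ x : I → ℝ, Integrable (fun t => F t (x t)) Λ →
      min (∫ t, F t (x t) ∂Λ) (1 - ∫ t, F t (x t) ∂Λ) ≤
        min (∫ t, F t (m t) ∂Λ) (1 - ∫ t, F t (m t) ∂Λ) :=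
  coordinatewise_median_maximizes_MHRD_general Λ F m hm
end

section
/- Let X_1, X_2, ... be i.i.d. copies of a random element X in a normed space with P(‖X - m‖ > M) < ε for some fixed m, M, and ε ∈ (0, 1/6). Suppose (1/n) Σ_{i=1}^n 1(‖X_i - m‖ > M) ≤ 2ε. Then for every x with ‖x - m‖ > 4M, (1/n) Σ_{i=1}^n ‖x - X_i‖ ≥ ((1-6ε)/2)·‖x - m‖ + (1/n) Σ_{i=1}^n ‖m - X_i‖ > (1/n) Σ_{i=1}^n ‖m - X_i‖. Consequently any minimizer of x ↦ (1/n)Σ_i ‖x - X_i‖ lies in the ball {x : ‖x - m‖ ≤ 4M}. -/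
open Finset

section SpatialMedian

variable {E : Type*} [SeminormedAddCommGroup E]

/-- An inlier `y` is farther from `x` than from `m` by at least `‖x - m‖ / 2`, while an outlier
is closer by at most `‖x - m‖`. -/
theorem norm_sub_ge_of_four_mul_le {x y m : E} {M : ℝ} (hx : 4 * M ≤ ‖x - m‖) :
    ‖m - y‖ + ‖x - m‖ / 2 - 3 / 2 * ‖x - m‖ * (if ‖y - m‖ > M then 1 else 0) ≤ ‖x - y‖ := by
  have hmy : ‖m - y‖ ≤ ‖x - m‖ + ‖x - y‖ := by
    simpa [norm_sub_rev m x] using norm_sub_le_norm_sub_add_norm_sub m x y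
  have hxm : ‖x - m‖ ≤ ‖x - y‖ + ‖m - y‖ := by
    simpa [norm_sub_rev y m] using norm_sub_le_norm_sub_add_norm_sub x y m
  split_ifs with hy
  · linarith
  · rw [norm_sub_rev] at hy
    linarith

theorem sum_norm_sub_ge_of_four_mul_le {ι : Type*} (s : Finset ι) (X : ι → E) {x m : E} {M : ℝ}
    (hx : 4 * M ≤ ‖x - m‖) :
    ∑ i ∈ s, ‖m - X i‖ +
        ‖x - m‖ * (#s / 2 - 3 / 2 * ∑ i ∈ s, if ‖X i - m‖ > M then (1 : ℝ) else 0) ≤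
      ∑ i ∈ s, ‖x - X i‖ := by
  calc ∑ i ∈ s, ‖m - X i‖ +
        ‖x - m‖ * (#s / 2 - 3 / 2 * ∑ i ∈ s, if ‖X i - m‖ > M then (1 : ℝ) else 0)
      = ∑ i ∈ s, (‖m - X i‖ + ‖x - m‖ / 2
          - 3 / 2 * ‖x - m‖ * (if ‖X i - m‖ > M then 1 else 0)) := by
        simp only [sum_sub_distrib, sum_add_distrib, sum_const, nsmul_eq_mul, ← mul_sum]
        ring
    _ ≤ ∑ i ∈ s, ‖x - X i‖ := sum_le_sum fun i _ => norm_sub_ge_of_four_mul_le hx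

theorem avg_norm_sub_ge_of_outlier_freq_le {n : ℕ} (hn : 0 < n) (X : Fin n → E) {x m : E}
    {M ε : ℝ} (hfreq : (1 / n : ℝ) * ∑ i, (if ‖X i - m‖ > M then (1 : ℝ) else 0) ≤ 2 * ε)
    (hx : 4 * M ≤ ‖x - m‖) :
    (1 - 6 * ε) / 2 * ‖x - m‖ + (1 / n : ℝ) * ∑ i, ‖m - X i‖ ≤ (1 / n : ℝ) * ∑ i, ‖x - X i‖ := by
  have hsum := sum_norm_sub_ge_of_four_mul_le univ X hx
  rw [card_univ, Fintype.card_fin] at hsum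
  have hn' : (0 : ℝ) < n := by exact_mod_cast hn
  have hscaled := mul_le_mul_of_nonneg_left hsum (one_div_pos.mpr hn').le
  have hcoef : (1 - 6 * ε) / 2 * ‖x - m‖ ≤
      (1 / n : ℝ) * (‖x - m‖ * (n / 2 - 3 / 2 * ∑ i, if ‖X i - m‖ > M then (1 : ℝ) else 0)) := by
    have : (1 / n : ℝ) * (‖x - m‖ * (n / 2 - 3 / 2 * ∑ i, if ‖X i - m‖ > M then (1 : ℝ) else 0)) =
        ‖x - m‖ * (1 / 2 - 3 / 2 * ((1 / n : ℝ) * ∑ i, if ‖X i - m‖ > M then (1 : ℝ) else 0)) := by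
      field_simp
    rw [this, mul_comm]
    exact mul_le_mul_of_nonneg_left (by linarith) (norm_nonneg _)
  rw [mul_add] at hscaled
  linarith

end SpatialMedian

/-- Deterministic key inequality for the boundedness of the empirical spatial median:
if at most a fraction `2ε` of the data lie outside the ball of radius `M` around `m`
(with `ε < 1/6`), then for every `x` with `‖x - m‖ > 4M`,
`(1/n) Σ ‖x - X_i‖ ≥ ((1-6ε)/2)‖x - m‖ + (1/n) Σ ‖m - X_i‖ > (1/n) Σ ‖m - X_i‖`;
consequently every minimizer of `x ↦ Σ ‖x - X_i‖` lies in `{x : ‖x - m‖ ≤ 4M}`. -/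
theorem empirical_spatial_median_bounded {E : Type*} [NormedAddCommGroup E]
    (n : ℕ) (hn : 1 ≤ n) (X : Fin n → E) (m : E) (M ε : ℝ) (hM : 0 < M)
    (hε : ε ∈ Set.Ioo (0 : ℝ) (1/6))
    (hfreq : (1 / n : ℝ) * ∑ i, (if ‖X i - m‖ > M then (1 : ℝ) else 0) ≤ 2 * ε) :
    (∀ x : E, ‖x - m‖ > 4 * M →
      ((1 / n : ℝ) * ∑ i, ‖x - X i‖ ≥
          (1 - 6 * ε) / 2 * ‖x - m‖ + (1 / n : ℝ) * ∑ i, ‖m - X i‖ ∧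
        (1 / n : ℝ) * ∑ i, ‖x - X i‖ > (1 / n : ℝ) * ∑ i, ‖m - X i‖)) ∧
    (∀ mhat : E, (∀ y, ∑ i, ‖mhat - X i‖ ≤ ∑ i, ‖y - X i‖) → ‖mhat - m‖ ≤ 4 * M) := by
  have hfar : ∀ x : E, ‖x - m‖ > 4 * M →
      ((1 / n : ℝ) * ∑ i, ‖x - X i‖ ≥
          (1 - 6 * ε) / 2 * ‖x - m‖ + (1 / n : ℝ) * ∑ i, ‖m - X i‖ ∧
        (1 / n : ℝ) * ∑ i, ‖x - X i‖ > (1 / n : ℝ) * ∑ i, ‖m - X i‖) := by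
    intro x hx
    have hge := avg_norm_sub_ge_of_outlier_freq_le hn X hfreq hx.le
    have hgain : 0 < (1 - 6 * ε) / 2 * ‖x - m‖ :=
      mul_pos (by linarith [hε.2]) (by linarith)
    exact ⟨hge, by linarith⟩
  refine ⟨hfar, fun mhat hmin => ?_⟩
  by_contra! hfar_mhat
  have hlt := (hfar mhat hfar_mhat).2
  have hle := mul_le_mul_of_nonneg_left (hmin m) (by positivity : (0 : ℝ) ≤ 1 / n)
  linarith
end
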